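/- arXiv:2103.05418 — 3 statements merged into one kernel-verified Lean document; each statement's English description precedes it below -/
import Mathlib

section
/- Let f : α → α be a bijection and Λ ⊆ α such that every x ∈ Λ has some n ≥ 1 with f^n(x) ∈ Λ; let R(x) := min{n ≥ 1 : f^n(x) ∈ Λ}. Define Δ := {(x, l) : x ∈ Λ, 0 ≤ l < R(x)} and π : Δ → α by π(x, l) := f^l(x). Then π is injective; π(x, 0) = x for all x ∈ Λ; and π maps {(x, l) ∈ Δ : l ≥ 1} bijectively onto the set ⋃_{x ∈ Λ} {f^l(x) : 1 ≤ l < R(x)}. -/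
/-!
Two levels `f^l x = f^m y` with `l < m` of an injective `f` force `x = f^(m-l) y`, so
`m - l ≥ 1` would be a return time of `y` to `Λ` not exceeding `m`, against `m < R y`.
-/

namespace Function

variable {α : Type*} {f : α → α}

/-- It is `0` (as `sInf ∅ = 0`) if `x` never returns. -/
noncomputable def firstReturnTime (f : α → α) (s : Set α) (x : α) : ℕ :=
  sInf {n | 1 ≤ n ∧ f^[n] x ∈ s}

theorem firstReturnTime_le {s : Set α} {x : α} {n : ℕ} (hn : 1 ≤ n) (h : f^[n] x ∈ s) :
    firstReturnTime f s x ≤ n :=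
  Nat.sInf_le ⟨hn, h⟩

theorem Injective.eq_iterate_sub_of_iterate_eq (hf : Injective f) {x y : α} {l m : ℕ}
    (hlm : l ≤ m) (h : f^[l] x = f^[m] y) : x = f^[m - l] y := by
  apply hf.iterate l
  rw [h, ← iterate_add_apply, Nat.add_sub_cancel' hlm]

theorem Injective.injOn_iterate_lt_firstReturnTime (hf : Injective f) (s : Set α) :
    Set.InjOn (fun q : α × ℕ => f^[q.2] q.1) {q | q.1 ∈ s ∧ q.2 < firstReturnTime f s q.1} := by
  rintro ⟨x, l⟩ ⟨hx, hl : l < firstReturnTime f s x⟩ ⟨y, m⟩ ⟨hy, hm : m < firstReturnTime f s y⟩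
    (h : f^[l] x = f^[m] y)
  wlog hlm : l ≤ m generalizing x l y m
  · exact (this y m hy hm x l hx hl h.symm (le_of_not_ge hlm)).symm
  obtain rfl | hlt := hlm.eq_or_lt
  · rw [hf.iterate l h]
  · have hx' := hf.eq_iterate_sub_of_iterate_eq hlm h
    have hreturn : firstReturnTime f s y ≤ m - l :=
      firstReturnTime_le (Nat.sub_pos_of_lt hlt) (hx' ▸ hx)
    omega

end Function

theorem tower_projection_bijective_general {α : Type*} (e : α ≃ α) (Λ : Set α) :
    Set.InjOn (fun q : α × ℕ => (⇑e)^[q.2] q.1)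
        {q : α × ℕ | q.1 ∈ Λ ∧ q.2 < sInf {n | 1 ≤ n ∧ (⇑e)^[n] q.1 ∈ Λ}} ∧
    (∀ x ∈ Λ, (fun q : α × ℕ => (⇑e)^[q.2] q.1) (x, 0) = x) ∧
    Set.BijOn (fun q : α × ℕ => (⇑e)^[q.2] q.1)
        {q : α × ℕ | q.1 ∈ Λ ∧ q.2 < sInf {n | 1 ≤ n ∧ (⇑e)^[n] q.1 ∈ Λ} ∧ 1 ≤ q.2}
        (⋃ x ∈ Λ, (fun l => (⇑e)^[l] x) '' {l | 1 ≤ l ∧ l < sInf {n | 1 ≤ n ∧ (⇑e)^[n] x ∈ Λ}}) := by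
  have hinj := e.injective.injOn_iterate_lt_firstReturnTime Λ
  refine ⟨hinj, fun _ _ => rfl, ?_, hinj.mono fun _ hq => And.intro hq.1 hq.2.1, ?_⟩
  · rintro ⟨x, l⟩ ⟨hx, hlt, hl⟩
    exact Set.mem_biUnion hx ⟨l, ⟨hl, hlt⟩, rfl⟩
  · intro z hz
    obtain ⟨x, hx, l, ⟨hl, hlt⟩, rfl⟩ := Set.mem_iUnion₂.mp hz
    exact ⟨(x, l), ⟨hx, hlt, hl⟩, rfl⟩

/-- **The tower projection.**
Let `f : α → α` be a bijection (an equivalence `e : α ≃ α`) and `Λ ⊆ α` a set every point of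
which returns to `Λ`; let `R x := min {n ≥ 1 : f^n x ∈ Λ}` be the first return time.  Define
`Δ := {(x, l) : x ∈ Λ, 0 ≤ l < R x}` and `π (x, l) := f^l x`.  Then `π` is injective on `Δ`;
`π (x, 0) = x` for all `x ∈ Λ`; and `π` maps `{(x, l) ∈ Δ : l ≥ 1}` bijectively onto
`⋃_{x ∈ Λ} {f^l x : 1 ≤ l < R x}`. -/
theorem tower_projection_bijective {α : Type*} (e : α ≃ α) (Λ : Set α)
    (hfwd : ∀ x ∈ Λ, ∃ n, 1 ≤ n ∧ (⇑e)^[n] x ∈ Λ) :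
    Set.InjOn (fun q : α × ℕ => (⇑e)^[q.2] q.1)
        {q : α × ℕ | q.1 ∈ Λ ∧ q.2 < sInf {n | 1 ≤ n ∧ (⇑e)^[n] q.1 ∈ Λ}} ∧
    (∀ x ∈ Λ, (fun q : α × ℕ => (⇑e)^[q.2] q.1) (x, 0) = x) ∧
    Set.BijOn (fun q : α × ℕ => (⇑e)^[q.2] q.1)
        {q : α × ℕ | q.1 ∈ Λ ∧ q.2 < sInf {n | 1 ≤ n ∧ (⇑e)^[n] q.1 ∈ Λ} ∧ 1 ≤ q.2}
        (⋃ x ∈ Λ, (fun l => (⇑e)^[l] x) '' {l | 1 ≤ l ∧ l < sInf {n | 1 ≤ n ∧ (⇑e)^[n] x ∈ Λ}}) :=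
  tower_projection_bijective_general e Λ
end

section
/- Let (U, d) be a metric space, μ a Borel probability measure on U, and F : U → U a measure-preserving Borel map. Assume there are constants C > 0 and β ∈ (0,1) such that for every bounded Lipschitz function h : U → ℝ and every k ≥ 1: |∫ h·(h ∘ F^k) dμ − (∫ h dμ)²| ≤ C·β^k·‖h‖_Lip², where ‖h‖_Lip := ‖h‖_∞ + Lip(h). Then for every z ∈ U, every r > 0, δ > 0 and every k ≥ 1: μ(B_r(z) ∩ F^{−k}(B_r(z))) ≤ C·β^k·(1 + δ^{−1})² + μ(B_{r+δ}(z))². -/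
/-!
Let `g` be the ramp equal to `1` on `B_r(z)`, to `0` outside `B_{r+δ}(z)` and linear in
`dist · z` in between; it is bounded by `1` and `δ⁻¹`-Lipschitz. Since `1_{B_r} ≤ g` and `g ≥ 0`,
`μ(B_r ∩ F^{-k} B_r) ≤ ∫ g · (g ∘ F^k)`, and decay of correlations bounds this by
`C β^k (1 + δ⁻¹)² + (∫ g)²`, where `∫ g ≤ μ(B_{r+δ})` because `g ≤ 1_{B_{r+δ}}`.
-/

open MeasureTheory Metric

section Indicator

variable {α : Type*}

theorem Set.indicator_inter_preimage_le_mul_comp {s : Set α} {g : α → ℝ} (T : α → α)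
    (hsg : s.indicator 1 ≤ g) (hg : 0 ≤ g) :
    (s ∩ T ⁻¹' s).indicator 1 ≤ fun x => g x * g (T x) := by
  intro x
  have hpre : (T ⁻¹' s).indicator (1 : α → ℝ) x = s.indicator 1 (T x) :=
    Set.indicator_comp_right (g := 1) T
  rw [Set.inter_indicator_one, Pi.mul_apply, hpre]
  exact mul_le_mul (hsg x) (hsg (T x)) (Set.indicator_nonneg (fun _ _ => zero_le_one) _) (hg x)

variable [MeasurableSpace α] {μ : Measure α} [IsFiniteMeasure μ] {s : Set α} {f : α → ℝ}

theorem measureReal_le_integral_of_indicator_le (hs : MeasurableSet s) (hf : Integrable f μ)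
    (h : s.indicator 1 ≤ f) : μ.real s ≤ ∫ x, f x ∂μ := by
  rw [← integral_indicator_one hs]
  exact integral_mono ((integrable_const 1).indicator hs) hf h

theorem integral_le_measureReal_of_le_indicator (hs : MeasurableSet s) (hf : Integrable f μ)
    (h : f ≤ s.indicator 1) : ∫ x, f x ∂μ ≤ μ.real s := by
  rw [← integral_indicator_one hs]
  exact integral_mono hf ((integrable_const 1).indicator hs) h

end Indicator

section BallRamp

variable {α : Type*} [PseudoMetricSpace α]

noncomputable def ballRamp (z : α) (r δ : ℝ) (x : α) : ℝ :=
  max 0 (min 1 ((r + δ - dist x z) / δ))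

variable (z : α) (r : ℝ) {δ : ℝ}

theorem ballRamp_nonneg : 0 ≤ ballRamp z r δ := fun _ => le_max_left _ _

theorem ballRamp_le_one : ballRamp z r δ ≤ 1 := fun _ => max_le zero_le_one (min_le_left _ _)

theorem abs_ballRamp_le_one (x : α) : |ballRamp z r δ x| ≤ 1 :=
  (abs_of_nonneg (ballRamp_nonneg z r x)).trans_le (ballRamp_le_one z r x)

theorem indicator_ball_le_ballRamp (hδ : 0 < δ) : (ball z r).indicator 1 ≤ ballRamp z r δ := by
  intro x
  by_cases hx : x ∈ ball z r
  · have : 1 ≤ (r + δ - dist x z) / δ := (one_le_div hδ).2 (by linarith [mem_ball.1 hx])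
    simp [Set.indicator_of_mem hx, ballRamp, min_eq_left this]
  · simpa [Set.indicator_of_notMem hx] using ballRamp_nonneg z r x

theorem ballRamp_le_indicator_ball (hδ : 0 < δ) :
    ballRamp z r δ ≤ (ball z (r + δ)).indicator 1 := by
  intro x
  by_cases hx : x ∈ ball z (r + δ)
  · simpa [Set.indicator_of_mem hx] using ballRamp_le_one z r x
  · have : (r + δ - dist x z) / δ ≤ 0 :=
      div_nonpos_of_nonpos_of_nonneg (by linarith [not_lt.1 (mt mem_ball.2 hx)]) hδ.le
    simp [Set.indicator_of_notMem hx, ballRamp, min_le_of_right_le this]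

theorem lipschitzWith_ballRamp (hδ : 0 < δ) :
    LipschitzWith (Real.toNNReal δ⁻¹) (ballRamp z r δ) := by
  have hlin : LipschitzWith (Real.toNNReal δ⁻¹) fun x => (r + δ - dist x z) / δ := by
    refine LipschitzWith.of_dist_le' fun x y => ?_
    rw [Real.dist_eq, div_sub_div_same, sub_sub_sub_cancel_left, abs_div, abs_of_pos hδ,
      div_eq_inv_mul, dist_comm x y]
    gcongr
    exact abs_dist_sub_le y x z
  exact (hlin.const_min 1).const_max 0

end BallRamp

theorem ball_return_bound_of_corr_decay_general {U : Type*} [MetricSpace U] [MeasurableSpace U]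
    [BorelSpace U] (μ : Measure U) [IsProbabilityMeasure μ]
    (F : U → U) (hFmeas : Measurable F)
    (C β : ℝ)
    (hdecay : ∀ (h : U → ℝ) (M : ℝ) (K : NNReal), (∀ x, |h x| ≤ M) →
      LipschitzWith K h → ∀ k : ℕ, 1 ≤ k →
      |∫ x, h x * h (F^[k] x) ∂μ - (∫ x, h x ∂μ) ^ 2| ≤ C * β ^ k * (M + K) ^ 2) :
    ∀ (z : U) (r δ : ℝ), 0 < r → 0 < δ → ∀ k : ℕ, 1 ≤ k →
      (μ (ball z r ∩ F^[k] ⁻¹' ball z r)).toReal ≤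
        C * β ^ k * (1 + δ⁻¹) ^ 2 + ((μ (ball z (r + δ))).toReal) ^ 2 := by
  intro z r δ _ hδ k hk
  set g := ballRamp z r δ
  have hg_lip := lipschitzWith_ballRamp z r hδ
  have hg_meas := hg_lip.continuous.measurable
  have hg_int : Integrable g μ :=
    .of_bound hg_meas.aestronglyMeasurable 1 (.of_forall (abs_ballRamp_le_one z r))
  have hgg_int : Integrable (fun x => g x * g (F^[k] x)) μ :=
    .of_bound (hg_meas.mul (hg_meas.comp (hFmeas.iterate k))).aestronglyMeasurable 1
      (.of_forall fun x => by
        rw [Real.norm_eq_abs, abs_mul]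
        exact mul_le_one₀ (abs_ballRamp_le_one z r x) (abs_nonneg _) (abs_ballRamp_le_one z r _))
  have hreturn : μ.real (ball z r ∩ F^[k] ⁻¹' ball z r) ≤ ∫ x, g x * g (F^[k] x) ∂μ :=
    measureReal_le_integral_of_indicator_le
      (measurableSet_ball.inter (hFmeas.iterate k measurableSet_ball)) hgg_int
      ((ball z r).indicator_inter_preimage_le_mul_comp _ (indicator_ball_le_ballRamp z r hδ)
        (ballRamp_nonneg z r))
  have hmean : (∫ x, g x ∂μ) ^ 2 ≤ μ.real (ball z (r + δ)) ^ 2 :=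
    pow_le_pow_left₀ (integral_nonneg (ballRamp_nonneg z r))
      (integral_le_measureReal_of_le_indicator measurableSet_ball hg_int
        (ballRamp_le_indicator_ball z r hδ)) 2
  have hcorr := hdecay g 1 _ (abs_ballRamp_le_one z r) hg_lip k hk
  rw [Real.coe_toNNReal _ (inv_nonneg.2 hδ.le)] at hcorr
  rw [← measureReal_def, ← measureReal_def]
  linarith [(abs_le.1 hcorr).2]

/-- **Return probabilities from exponential decay of correlations.**
Let `(U, d)` be a metric space, `μ` a Borel probability measure, and `F : U → U` a
measure-preserving Borel map.  Assume exponential decay of correlations for bounded Lipschitz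
observables: for every `h` bounded by `M` and `K`-Lipschitz and every `k ≥ 1`,
`|∫ h · (h ∘ F^k) dμ − (∫ h dμ)²| ≤ C β^k (M + K)²` (this is the statement
`… ≤ C β^k ‖h‖_Lip²` with `‖h‖_Lip = ‖h‖_∞ + Lip h`, quantified over all admissible bounds
`M ≥ ‖h‖_∞` and Lipschitz constants `K ≥ Lip h`).  Then for all `z`, `r > 0`, `δ > 0`,
`k ≥ 1`: `μ(B_r(z) ∩ F^{-k}(B_r(z))) ≤ C β^k (1 + δ⁻¹)² + μ(B_{r+δ}(z))²`. -/
theorem ball_return_bound_of_corr_decay {U : Type*} [MetricSpace U] [MeasurableSpace U]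
    [BorelSpace U] (μ : Measure U) [IsProbabilityMeasure μ]
    (F : U → U) (hFmeas : Measurable F) (hFpres : MeasurePreserving F μ μ)
    (C β : ℝ) (hC : 0 < C) (hβ0 : 0 < β) (hβ1 : β < 1)
    (hdecay : ∀ (h : U → ℝ) (M : ℝ) (K : NNReal), (∀ x, |h x| ≤ M) →
      LipschitzWith K h → ∀ k : ℕ, 1 ≤ k →
      |∫ x, h x * h (F^[k] x) ∂μ - (∫ x, h x ∂μ) ^ 2| ≤ C * β ^ k * (M + K) ^ 2) :
    ∀ (z : U) (r δ : ℝ), 0 < r → 0 < δ → ∀ k : ℕ, 1 ≤ k →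
      (μ (ball z r ∩ F^[k] ⁻¹' ball z r)).toReal ≤
        C * β ^ k * (1 + δ⁻¹) ^ 2 + ((μ (ball z (r + δ))).toReal) ^ 2 :=
  ball_return_bound_of_corr_decay_general μ F hFmeas C β hdecay
end

section
/- Let (U, d) be a metric space, μ a Borel probability measure on U, ℓ : U → (0, ∞) a measurable function, and (μ_x)_{x ∈ U} a family of Borel probability measures that disintegrates μ, i.e. μ(S) = ∫ μ_x(S) dμ(x) for every Borel set S. Let C ≥ 1, b > 0, k > 0 be constants and assume: (i) μ({x : ℓ(x) < ε}) ≤ C·ε^b for every ε ∈ (0,1); (ii) for every x, every δ > 0 and every Borel set S ⊆ U with diam(S) ≤ δ, μ_x(S) ≤ C·(δ/ℓ(x))^k. Then for every z ∈ U and every r ∈ (0,1): μ(B_r(z)) ≤ C·(1 + 2^k)·r^{b·k/(b + k)}. Consequently, for every z ∈ U, liminf_{r → 0⁺} (log μ(B_r(z)) / log r) ≥ b·k/(b + k); in particular, if the limit lim_{r → 0} log μ(B_r(z))/log r exists, it is at least b·k/(b + k). -/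
/-!
Fix `r` and cut the leaves at the threshold `ε = r ^ (k / (b + k))`. On `{ℓ < ε}` the conditional
measure of `B_r(z)` is at most `1`, and this set has measure `≤ C ε ^ b`; elsewhere `B_r(z)` has
diameter `≤ 2r` and meets each leaf in mass `≤ C (2r / ε) ^ k`. Integrating the disintegration
gives `μ (B_r(z)) ≤ C ε ^ b + C (2r / ε) ^ k`, and the choice of `ε` makes both terms multiples of
`r ^ (bk / (b + k))`. Since `log r < 0`, taking logarithms reverses the bound:
`log μ(B_r(z)) / log r ≥ bk / (b + k) + log (C (1 + 2 ^ k)) / log r`, and the error term tends to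
`0` as `r → 0⁺`.
-/

open MeasureTheory Metric Filter Topology
open scoped ENNReal

theorem MeasureTheory.lintegral_le_measure_add_of_le_one {α : Type*} [MeasurableSpace α]
    {μ : Measure α} [IsProbabilityMeasure μ] {f : α → ℝ≥0∞} {A : Set α} (hA : MeasurableSet A)
    {c : ℝ≥0∞} (hf_one : ∀ x ∈ A, f x ≤ 1) (hf_c : ∀ x ∉ A, f x ≤ c) :
    ∫⁻ x, f x ∂μ ≤ μ A + c := by
  have hf : ∀ x, f x ≤ A.indicator 1 x + c := by
    intro x
    by_cases hx : x ∈ A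
    · simpa [hx] using (hf_one x hx).trans le_self_add
    · simpa [hx] using hf_c x hx
  calc ∫⁻ x, f x ∂μ ≤ ∫⁻ x, (A.indicator 1 x + c) ∂μ := lintegral_mono hf
    _ = μ A + c := by
      rw [lintegral_add_right _ measurable_const, lintegral_indicator_one hA, lintegral_const,
        measure_univ, mul_one]

theorem Real.mul_rpow_add_mul_div_rpow_eq {r : ℝ} (hr : 0 < r) {b k : ℝ} (hbk : b + k ≠ 0)
    (C : ℝ) :
    C * (r ^ (k / (b + k))) ^ b + C * (2 * r / r ^ (k / (b + k))) ^ k =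
      C * (1 + 2 ^ k) * r ^ (b * k / (b + k)) := by
  have hpow_b : (r ^ (k / (b + k))) ^ b = r ^ (b * k / (b + k)) := by
    rw [← Real.rpow_mul hr.le]
    congr 1
    field_simp
  have hdiv : r / r ^ (k / (b + k)) = r ^ (b / (b + k)) := by
    rw [div_eq_iff (Real.rpow_pos_of_pos hr _).ne', ← Real.rpow_add hr, ← add_div,
      div_self hbk, Real.rpow_one]
  have hpow_k : (2 * r / r ^ (k / (b + k))) ^ k = 2 ^ k * r ^ (b * k / (b + k)) := by
    rw [mul_div_assoc, Real.mul_rpow zero_le_two (by positivity), hdiv, ← Real.rpow_mul hr.le]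
    congr 2
    field_simp
  rw [hpow_b, hpow_k]
  ring

theorem ENNReal.add_log_div_log_le_log_mul_inv_log {t : ℝ≥0∞} {M α r : ℝ} (hr₀ : 0 < r)
    (hr₁ : r < 1) (ht : t ≤ ENNReal.ofReal (M * r ^ α)) :
    ((α + Real.log M / Real.log r : ℝ) : EReal) ≤ ENNReal.log t * ((Real.log r)⁻¹ : EReal) := by
  have hlog_r : Real.log r < 0 := Real.log_neg hr₀ hr₁
  have hinv : (Real.log r)⁻¹ < 0 := inv_lt_zero.mpr hlog_r
  rcases eq_or_ne t 0 with rfl | ht₀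
  · rw [ENNReal.log_zero, ← EReal.coe_inv, EReal.bot_mul_coe_of_neg hinv]
    exact le_top
  have ht_real : 0 < t.toReal :=
    ENNReal.toReal_pos ht₀ (ht.trans_lt ENNReal.ofReal_lt_top).ne
  have hbound : 0 < M * r ^ α := ENNReal.ofReal_pos.mp ((pos_iff_ne_zero.mpr ht₀).trans_le ht)
  have ht_le : t.toReal ≤ M * r ^ α := ENNReal.toReal_le_of_le_ofReal hbound.le ht
  have hM : 0 < M := pos_of_mul_pos_left hbound (by positivity)
  have hlog_t : Real.log t.toReal ≤ Real.log M + α * Real.log r := by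
    calc Real.log t.toReal ≤ Real.log (M * r ^ α) := Real.log_le_log ht_real ht_le
      _ = Real.log M + α * Real.log r := by
        rw [Real.log_mul hM.ne' (by positivity), Real.log_rpow hr₀]
  rw [ENNReal.log_pos_real' ht_real, ← EReal.coe_inv, ← EReal.coe_mul, EReal.coe_le_coe_iff]
  calc α + Real.log M / Real.log r = (Real.log M + α * Real.log r) * (Real.log r)⁻¹ := by
        field_simp [hlog_r.ne]
        ring
    _ ≤ Real.log t.toReal * (Real.log r)⁻¹ := mul_le_mul_of_nonpos_right hlog_t hinv.le

theorem le_liminf_log_mul_inv_log_of_le_rpow {m : ℝ → ℝ≥0∞} {M α : ℝ}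
    (hm : ∀ r, 0 < r → r < 1 → m r ≤ ENNReal.ofReal (M * r ^ α)) :
    (α : EReal) ≤ liminf (fun r => ENNReal.log (m r) * ((Real.log r)⁻¹ : EReal)) (𝓝[>] 0) := by
  have hlim : Tendsto (fun r => ((α + Real.log M / Real.log r : ℝ) : EReal)) (𝓝[>] 0) (𝓝 α) := by
    rw [EReal.tendsto_coe]
    simpa using (Real.tendsto_log_nhdsGT_zero.const_div_atBot (Real.log M)).const_add α
  rw [← hlim.liminf_eq]
  refine liminf_le_liminf ?_
  filter_upwards [Ioo_mem_nhdsGT one_pos] with r ⟨hr₀, hr₁⟩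
  exact ENNReal.add_log_div_log_le_log_mul_inv_log hr₀ hr₁ (hm r hr₀ hr₁)

theorem measure_ball_le_of_disintegration {U : Type*} [MetricSpace U] [MeasurableSpace U]
    [OpensMeasurableSpace U] {μ : Measure U} [IsProbabilityMeasure μ] {ℓ : U → ℝ}
    (hℓ : Measurable ℓ) {μx : U → Measure U} (hμx : ∀ x, IsProbabilityMeasure (μx x))
    (hdisint : ∀ S : Set U, MeasurableSet S → μ S = ∫⁻ x, μx x S ∂μ)
    {C b k : ℝ} (hC : 0 ≤ C) (hb : 0 < b) (hk : 0 < k)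
    (hi : ∀ ε : ℝ, 0 < ε → ε < 1 → μ {x | ℓ x < ε} ≤ ENNReal.ofReal (C * ε ^ b))
    (hii : ∀ x : U, ∀ δ : ℝ, 0 < δ → ∀ S : Set U, MeasurableSet S → diam S ≤ δ →
      μx x S ≤ ENNReal.ofReal (C * (δ / ℓ x) ^ k))
    (z : U) {r : ℝ} (hr₀ : 0 < r) (hr₁ : r < 1) :
    μ (ball z r) ≤ ENNReal.ofReal (C * (1 + 2 ^ k) * r ^ (b * k / (b + k))) := by
  have hbk : 0 < b + k := add_pos hb hk
  obtain ⟨ε, hε⟩ : ∃ ε, ε = r ^ (k / (b + k)) := ⟨_, rfl⟩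
  have hε₀ : 0 < ε := hε ▸ Real.rpow_pos_of_pos hr₀ _
  have hε₁ : ε < 1 := hε ▸ Real.rpow_lt_one hr₀.le hr₁ (div_pos hk hbk)
  have hleaf : ∀ x, ε ≤ ℓ x → μx x (ball z r) ≤ ENNReal.ofReal (C * (2 * r / ε) ^ k) := by
    intro x hx
    refine (hii x (2 * r) (by positivity) _ measurableSet_ball (diam_ball hr₀.le)).trans ?_
    have : 0 < ℓ x := hε₀.trans_le hx
    gcongr
  calc μ (ball z r) = ∫⁻ x, μx x (ball z r) ∂μ := hdisint _ measurableSet_ball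
    _ ≤ μ {x | ℓ x < ε} + ENNReal.ofReal (C * (2 * r / ε) ^ k) :=
      lintegral_le_measure_add_of_le_one (hℓ measurableSet_Iio)
        (fun x _ => have := hμx x; prob_le_one) (fun x hx => hleaf x (not_lt.mp hx))
    _ ≤ ENNReal.ofReal (C * ε ^ b) + ENNReal.ofReal (C * (2 * r / ε) ^ k) := by
      gcongr
      exact hi ε hε₀ hε₁
    _ = ENNReal.ofReal (C * (1 + 2 ^ k) * r ^ (b * k / (b + k))) := by
      rw [← ENNReal.ofReal_add (by positivity) (by positivity), hε,
        Real.mul_rpow_add_mul_div_rpow_eq hr₀ hbk.ne']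

theorem dimension_lower_bound_induced_partition_general {U : Type*} [MetricSpace U] [MeasurableSpace U]
    [BorelSpace U] (μ : Measure U) [IsProbabilityMeasure μ]
    (ℓ : U → ℝ) (hℓmeas : Measurable ℓ)
    (μx : U → Measure U) (hμxprob : ∀ x, IsProbabilityMeasure (μx x))
    (hdisint : ∀ S : Set U, MeasurableSet S → μ S = ∫⁻ x, μx x S ∂μ)
    (C b k : ℝ) (hC : 1 ≤ C) (hb : 0 < b) (hk : 0 < k)
    (hi : ∀ ε : ℝ, 0 < ε → ε < 1 → μ {x | ℓ x < ε} ≤ ENNReal.ofReal (C * ε ^ b))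
    (hii : ∀ x : U, ∀ δ : ℝ, 0 < δ → ∀ S : Set U, MeasurableSet S → diam S ≤ δ →
      μx x S ≤ ENNReal.ofReal (C * (δ / ℓ x) ^ k)) :
    (∀ z : U, ∀ r : ℝ, 0 < r → r < 1 →
      μ (ball z r) ≤ ENNReal.ofReal (C * (1 + 2 ^ k) * r ^ (b * k / (b + k)))) ∧
    (∀ z : U,
      (↑(b * k / (b + k)) : EReal) ≤
        liminf (fun r : ℝ => ENNReal.log (μ (ball z r)) * ((Real.log r)⁻¹ : EReal))
          (nhdsWithin 0 (Set.Ioi 0))) ∧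
    (∀ z : U, ∀ L : EReal,
      Tendsto (fun r : ℝ => ENNReal.log (μ (ball z r)) * ((Real.log r)⁻¹ : EReal))
        (nhdsWithin 0 (Set.Ioi 0)) (nhds L) →
      (↑(b * k / (b + k)) : EReal) ≤ L) := by
  have hball : ∀ z : U, ∀ r : ℝ, 0 < r → r < 1 →
      μ (ball z r) ≤ ENNReal.ofReal (C * (1 + 2 ^ k) * r ^ (b * k / (b + k))) :=
    fun z _ hr₀ hr₁ => measure_ball_le_of_disintegration hℓmeas hμxprob hdisint
      (zero_le_one.trans hC) hb hk hi hii z hr₀ hr₁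
  have hliminf : ∀ z : U, (↑(b * k / (b + k)) : EReal) ≤
      liminf (fun r : ℝ => ENNReal.log (μ (ball z r)) * ((Real.log r)⁻¹ : EReal)) (𝓝[>] 0) :=
    fun z => le_liminf_log_mul_inv_log_of_le_rpow (hball z)
  exact ⟨hball, hliminf, fun z L hL => hL.liminf_eq ▸ hliminf z⟩

/-- **Lower bound on the pointwise dimension via an induced measurable partition.**
Let `(U, d)` be a metric space, `μ` a Borel probability measure, `ℓ : U → (0, ∞)` measurable,
and `(μ_x)` a disintegration of `μ`.  Let `C ≥ 1`, `b > 0`, `k > 0` with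
(i) `μ {ℓ < ε} ≤ C ε^b` for `ε ∈ (0,1)`; (ii) `μ_x S ≤ C (δ / ℓ x)^k` whenever
`diam S ≤ δ`.  Then `μ(B_r(z)) ≤ C (1 + 2^k) r^{bk/(b+k)}` for `r ∈ (0,1)`; consequently
`liminf_{r → 0⁺} log μ(B_r(z)) / log r ≥ bk/(b+k)` (in the extended reals, with
`log 0 = −∞`), and in particular if the limit `lim_{r → 0⁺} log μ(B_r(z)) / log r` exists it
is at least `bk/(b+k)`. -/
theorem dimension_lower_bound_induced_partition {U : Type*} [MetricSpace U] [MeasurableSpace U]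
    [BorelSpace U] (μ : Measure U) [IsProbabilityMeasure μ]
    (ℓ : U → ℝ) (hℓmeas : Measurable ℓ) (hℓpos : ∀ x, 0 < ℓ x)
    (μx : U → Measure U) (hμxprob : ∀ x, IsProbabilityMeasure (μx x))
    (hdisint : ∀ S : Set U, MeasurableSet S → μ S = ∫⁻ x, μx x S ∂μ)
    (C b k : ℝ) (hC : 1 ≤ C) (hb : 0 < b) (hk : 0 < k)
    (hi : ∀ ε : ℝ, 0 < ε → ε < 1 → μ {x | ℓ x < ε} ≤ ENNReal.ofReal (C * ε ^ b))
    (hii : ∀ x : U, ∀ δ : ℝ, 0 < δ → ∀ S : Set U, MeasurableSet S → diam S ≤ δ →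
      μx x S ≤ ENNReal.ofReal (C * (δ / ℓ x) ^ k)) :
    (∀ z : U, ∀ r : ℝ, 0 < r → r < 1 →
      μ (ball z r) ≤ ENNReal.ofReal (C * (1 + 2 ^ k) * r ^ (b * k / (b + k)))) ∧
    (∀ z : U,
      (↑(b * k / (b + k)) : EReal) ≤
        liminf (fun r : ℝ => ENNReal.log (μ (ball z r)) * ((Real.log r)⁻¹ : EReal))
          (nhdsWithin 0 (Set.Ioi 0))) ∧
    (∀ z : U, ∀ L : EReal,
      Tendsto (fun r : ℝ => ENNReal.log (μ (ball z r)) * ((Real.log r)⁻¹ : EReal))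
        (nhdsWithin 0 (Set.Ioi 0)) (nhds L) →
      (↑(b * k / (b + k)) : EReal) ≤ L) :=
  dimension_lower_bound_induced_partition_general μ ℓ hℓmeas μx hμxprob hdisint C b k hC hb hk hi
    hii
end
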